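/- Let V be a finite-dimensional real normed vector space, let k ≥ 2, and let γ₁, …, γ_k ∈ GL(V) be biproximal with data (L_i⁺, L_i⁻, W_i) for i = 1, …, k. Assume that the 2k lines L₁⁺, L₁⁻, …, L_k⁺, L_k⁻ are pairwise distinct, and that for all i ≠ j and all signs α, β ∈ {+, −} the line L_i^α is not contained in L_j^β + W_j. Then there exists N₀ ∈ ℕ such that for every N ≥ N₀: the elements γ₁^N, …, γ_k^N freely generate a free subgroup of GL(V) (i.e. the group homomorphism from the free group on k generators to GL(V) sending the i-th generator to γ_i^N is injective), and the subgroup they generate is discrete in GL(V). (The freeness and discreteness conclusions of Lemma 4.7.) -/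

import Mathlib

/-!
Ping-pong with cones. Each letter `γ i`, `(γ i)⁻¹` is biproximal with an attracting line `A` and
a repelling hyperplane `R` (the opposite line plus `W i`), and `IsCompl A R`. If `a` is the
eigenvalue on `A` and `π` the projection onto `A` along `R`, the attraction hypothesis gives
`a⁻ⁿ • gⁿ → π` pointwise, hence in norm since `V` is finite-dimensional. So large powers map every
vector at relative distance `≥ δ` from `R` into the `δ`-cone around `A`. General position keeps
that cone away from every repelling hyperplane except the one of the inverse letter, so a reduced
word sends a base point `x₀`, chosen away from all repelling hyperplanes, into the cone of its
first letter. As `x₀` avoids the closed union of the cones, every nontrivial element moves `x₀` by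
a uniform amount: this gives freeness, and a uniform lower bound on `‖g - 1‖`, hence discreteness.
-/

open Filter

/-- `g ∈ GL(V)` is biproximal with attracting line `Lp`, repelling line `Lm` and
invariant complement `W`. -/
structure IsBiproximal {V : Type*} [NormedAddCommGroup V] [NormedSpace ℝ V]
    (g : V ≃ₗ[ℝ] V) (Lp Lm W : Submodule ℝ V) : Prop where
  finrank_Lp : Module.finrank ℝ Lp = 1
  finrank_Lm : Module.finrank ℝ Lm = 1
  ne : Lp ≠ Lm
  inf_lines : Lp ⊓ Lm = ⊥
  inf_W : (Lp ⊔ Lm) ⊓ W = ⊥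
  sup_top : Lp ⊔ Lm ⊔ W = ⊤
  map_Lp : Lp.map (g : V →ₗ[ℝ] V) = Lp
  map_Lm : Lm.map (g : V →ₗ[ℝ] V) = Lm
  map_W : W.map (g : V →ₗ[ℝ] V) = W
  attract : ∀ w : V, w ∉ Lm ⊔ W →
    Tendsto (fun n : ℕ => Metric.infDist (‖(g ^ n) w‖⁻¹ • (g ^ n) w) (Lp : Set V))
      atTop (nhds 0)
  repel : ∀ w : V, w ∉ Lp ⊔ W →
    Tendsto (fun n : ℕ => Metric.infDist (‖(g⁻¹ ^ n) w‖⁻¹ • (g⁻¹ ^ n) w) (Lm : Set V))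
      atTop (nhds 0)

open Metric Filter Topology

namespace Submodule

variable {𝕜 V : Type*} [NontriviallyNormedField 𝕜] [NormedAddCommGroup V] [NormedSpace 𝕜 V]

theorem infDist_eq_norm_mkQ (S : Submodule 𝕜 V) (x : V) : infDist x S = ‖S.mkQ x‖ :=
  (QuotientAddGroup.norm_mk (S := S.toAddSubgroup) x).symm

theorem infDist_smul (S : Submodule 𝕜 V) (c : 𝕜) (x : V) :
    infDist (c • x) S = ‖c‖ * infDist x S := by
  rw [infDist_eq_norm_mkQ, infDist_eq_norm_mkQ, map_smul, norm_smul]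

theorem infDist_add_of_mem_left {S : Submodule 𝕜 V} {p : V} (hp : p ∈ S) (x : V) :
    infDist (p + x) S = infDist x S := by
  rw [infDist_eq_norm_mkQ, infDist_eq_norm_mkQ, map_add, (S.mkQ_apply p).trans
    ((Quotient.mk_eq_zero S).2 hp), zero_add]

theorem exists_pos_mul_norm_le_infDist_add_infDist [CompleteSpace 𝕜] [FiniteDimensional 𝕜 V]
    {S T : Submodule 𝕜 V} (h : Disjoint S T) :
    ∃ c > 0, ∀ v : V, c * ‖v‖ ≤ infDist v S + infDist v T := by
  have := S.closed_of_finiteDimensional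
  have := T.closed_of_finiteDimensional
  obtain ⟨K, hK, hf⟩ := (S.mkQ.prod T.mkQ).exists_antilipschitzWith <| by
    rw [LinearMap.ker_prod, ker_mkQ, ker_mkQ, h.eq_bot]
  have hK' : (0 : ℝ) < K := hK
  refine ⟨(K : ℝ)⁻¹, inv_pos.2 hK', fun v => ?_⟩
  rw [inv_mul_le_iff₀ hK', infDist_eq_norm_mkQ, infDist_eq_norm_mkQ]
  calc ‖v‖ ≤ K * ‖(S.mkQ.prod T.mkQ) v‖ := by
        simpa using hf.le_mul_norm_sub v 0
    _ ≤ K * (‖S.mkQ v‖ + ‖T.mkQ v‖) := by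
        gcongr
        exact max_le_add_of_nonneg (norm_nonneg _) (norm_nonneg _)

theorem eventually_le_infDist_of_infDist_le [CompleteSpace 𝕜] [FiniteDimensional 𝕜 V]
    {S T : Submodule 𝕜 V} (h : Disjoint S T) :
    ∀ᶠ δ in 𝓝[>] (0 : ℝ), ∀ v : V, infDist v S ≤ δ * ‖v‖ → δ * ‖v‖ ≤ infDist v T := by
  obtain ⟨c, hc, hsep⟩ := exists_pos_mul_norm_le_infDist_add_infDist h
  filter_upwards [nhdsWithin_le_nhds (eventually_le_nhds (half_pos hc))] with δ hδ v hv
  nlinarith [hsep v, norm_nonneg v]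

end Submodule

theorem ContinuousLinearMap.tendsto_of_tendsto_apply {𝕜 α E F : Type*}
    [NontriviallyNormedField 𝕜] [CompleteSpace 𝕜]
    [NormedAddCommGroup E] [NormedSpace 𝕜 E] [FiniteDimensional 𝕜 E]
    [NormedAddCommGroup F] [NormedSpace 𝕜 F] {l : Filter α} {u : α → E →L[𝕜] F}
    {u₀ : E →L[𝕜] F} (h : ∀ x, Tendsto (fun a => u a x) l (𝓝 (u₀ x))) :
    Tendsto u l (𝓝 u₀) := by
  let b := Module.finBasis 𝕜 E
  obtain ⟨C, -, hC⟩ := b.exists_opNorm_le (F := F)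
  rw [tendsto_iff_norm_sub_tendsto_zero]
  refine squeeze_zero (fun _ => norm_nonneg _)
    (fun a => hC (M := ∑ i, ‖u a (b i) - u₀ (b i)‖) (by positivity) fun i => ?_) ?_
  · exact Finset.single_le_sum (f := fun i => ‖u a (b i) - u₀ (b i)‖)
      (fun _ _ => norm_nonneg _) (Finset.mem_univ i)
  · simpa using (tendsto_finsetSum _ fun i _ =>
      tendsto_iff_norm_sub_tendsto_zero.1 (h (b i))).const_mul C

namespace LinearEquiv
variable {K M : Type*} [Field K] [AddCommGroup M] [Module K M] {g : M ≃ₗ[K] M}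

theorem exists_apply_eq_smul_of_map_eq {L : Submodule K M} (hL : Module.finrank K L = 1)
    (hg : L.map (g : M →ₗ[K] M) = L) : ∃ a : K, a ≠ 0 ∧ ∀ v ∈ L, g v = a • v := by
  obtain ⟨⟨u, huL⟩, hu0, hspan⟩ := finrank_eq_one_iff'.1 hL
  obtain ⟨a, ha⟩ := hspan ⟨g u, hg ▸ Submodule.mem_map_of_mem huL⟩
  have hgu : g u = a • u := congrArg Subtype.val ha.symm
  refine ⟨a, fun h => hu0 ?_, fun v hv => ?_⟩
  · rw [h, zero_smul, map_eq_zero_iff] at hgu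
    exact Subtype.ext hgu
  · obtain ⟨c, hc⟩ := hspan ⟨v, hv⟩
    obtain rfl : c • u = v := congrArg Subtype.val hc
    rw [map_smul, hgu, smul_comm]

theorem pow_apply_eq_pow_smul {L : Submodule K M} {a : K} (h : ∀ v ∈ L, g v = a • v)
    (n : ℕ) {v : M} (hv : v ∈ L) : (g ^ n) v = a ^ n • v := by
  induction n with
  | zero => simp
  | succ n ih => rw [pow_succ, mul_apply, h v hv, map_smul, ih, smul_smul, ← pow_succ']

theorem pow_apply_mem_of_map_eq {N : Submodule K M} (h : N.map (g : M →ₗ[K] M) = N)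
    (n : ℕ) {v : M} (hv : v ∈ N) : (g ^ n) v ∈ N := by
  induction n with
  | zero => simpa
  | succ n ih => exact pow_succ' g n ▸ h ▸ Submodule.mem_map_of_mem ih

end LinearEquiv

theorem infDist_le_mul_norm_of_norm_sub_le {V : Type*} [SeminormedAddCommGroup V]
    {L M : Set V} {v p y : V} (hp : p ∈ L) (hvp : v - p ∈ M) {δ : ℝ} (hδ : 0 < δ)
    (hv : δ * ‖v‖ ≤ infDist v M) (hy : ‖y - p‖ ≤ δ ^ 2 / (1 + δ) * ‖v‖) :
    infDist y L ≤ δ * ‖y‖ := by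
  have hyL : infDist y L ≤ ‖y - p‖ := by simpa [dist_eq_norm] using infDist_le_dist_of_mem hp
  have hvM : infDist v M ≤ ‖p‖ := by simpa [dist_eq_norm] using infDist_le_dist_of_mem (x := v) hvp
  have hpy : ‖p‖ ≤ ‖y‖ + ‖y - p‖ := by simpa [norm_sub_rev] using norm_le_norm_add_norm_sub' p y
  have hy' : ‖y - p‖ * (1 + δ) ≤ δ ^ 2 * ‖v‖ := by
    rwa [div_mul_eq_mul_div, le_div_iff₀ (by positivity)] at hy
  nlinarith

theorem Submodule.infDist_inv_norm_smul_smul {V : Type*} [NormedAddCommGroup V]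
    [NormedSpace ℝ V] (S : Submodule ℝ V) {c : ℝ} (hc : c ≠ 0) (x : V) :
    infDist (‖c • x‖⁻¹ • c • x) S = infDist x S / ‖x‖ := by
  have : ‖c‖ ≠ 0 := norm_ne_zero_iff.2 hc
  rw [infDist_smul, infDist_smul, norm_inv, norm_norm, norm_smul]
  field_simp

section Contraction
variable {V : Type*} [NormedAddCommGroup V] [NormedSpace ℝ V] [FiniteDimensional ℝ V]
  {g : V ≃ₗ[ℝ] V} {L M : Submodule ℝ V}

theorem tendsto_inv_pow_smul_pow_apply (hLM : IsCompl L M) (hL : L ≠ ⊥) {a : ℝ} (ha : a ≠ 0)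
    (hgL : ∀ v ∈ L, g v = a • v) (hgM : M.map (g : V →ₗ[ℝ] V) = M)
    (hatt : ∀ w ∉ M, Tendsto (fun n : ℕ => infDist (‖(g ^ n) w‖⁻¹ • (g ^ n) w) L) atTop (𝓝 0))
    {m : V} (hm : m ∈ M) : Tendsto (fun n : ℕ => (a ^ n)⁻¹ • (g ^ n) m) atTop (𝓝 0) := by
  obtain ⟨u, huL, hu0⟩ := Submodule.exists_mem_ne_zero_of_ne_bot hL
  obtain ⟨c, hc, hsep⟩ := Submodule.exists_pos_mul_norm_le_infDist_add_infDist hLM.disjoint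
  set x : ℕ → V := fun n => (a ^ n)⁻¹ • (g ^ n) m
  have hxM (n : ℕ) : x n ∈ M := M.smul_mem _ (g.pow_apply_mem_of_map_eq hgM n hm)
  have hy (n : ℕ) : u + x n ≠ 0 := fun h => hu0 <| (Submodule.disjoint_def.1 hLM.disjoint) u huL
    (by simpa [eq_neg_of_add_eq_zero_left h] using M.neg_mem (hxM n))
  -- `(g ^ n) (u + m) = a ^ n • (u + x n)`: this is the attraction hypothesis for `u + m`
  have hr : Tendsto (fun n => infDist (u + x n) L / ‖u + x n‖) atTop (𝓝 0) := by
    refine (hatt (u + m) fun h => ?_).congr fun n => ?_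
    · exact hu0 <| (Submodule.disjoint_def.1 hLM.disjoint) u huL (by simpa using M.sub_mem h hm)
    · rw [← L.infDist_inv_norm_smul_smul (pow_ne_zero n ha)]
      congr 3 <;> simp [x, smul_add, g.pow_apply_eq_pow_smul hgL n huL, pow_ne_zero n ha]
  have hbound (n : ℕ) : c * ‖x n‖ ≤ infDist (u + x n) L / ‖u + x n‖ * (‖u‖ + ‖x n‖) := by
    calc c * ‖x n‖ ≤ infDist (x n) L := by
          simpa [infDist_zero_of_mem (hxM n)] using hsep (x n)
      _ = infDist (u + x n) L / ‖u + x n‖ * ‖u + x n‖ := by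
          rw [div_mul_cancel₀ _ (norm_ne_zero_iff.2 (hy n)), L.infDist_add_of_mem_left huL]
      _ ≤ _ := by gcongr; exacts [div_nonneg infDist_nonneg (norm_nonneg _), norm_add_le _ _]
  rw [tendsto_zero_iff_norm_tendsto_zero]
  refine squeeze_zero' (.of_forall fun n => norm_nonneg _) ?_
    (by simpa using hr.const_mul (2 * ‖u‖ / c))
  filter_upwards [hr.eventually (eventually_le_nhds (half_pos hc))] with n hn
  rw [div_mul_eq_mul_div, le_div_iff₀ hc]
  nlinarith [hbound n, norm_nonneg (x n), norm_nonneg u]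

theorem tendsto_inv_pow_smul_pow (hLM : IsCompl L M) (hL : L ≠ ⊥) {a : ℝ} (ha : a ≠ 0)
    (hgL : ∀ v ∈ L, g v = a • v) (hgM : M.map (g : V →ₗ[ℝ] V) = M)
    (hatt : ∀ w ∉ M, Tendsto (fun n : ℕ => infDist (‖(g ^ n) w‖⁻¹ • (g ^ n) w) L) atTop (𝓝 0)) :
    Tendsto (fun n : ℕ => LinearMap.toContinuousLinearMap
      ((a ^ n)⁻¹ • ((g ^ n : V ≃ₗ[ℝ] V) : V →ₗ[ℝ] V))) atTop
      (𝓝 (LinearMap.toContinuousLinearMap (L.projection M hLM))) := by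
  refine ContinuousLinearMap.tendsto_of_tendsto_apply fun v => ?_
  have hsplit (n : ℕ) : (a ^ n)⁻¹ • (g ^ n) v =
      L.projection M hLM v + (a ^ n)⁻¹ • (g ^ n) (M.projection L hLM.symm v) := by
    conv_lhs => rw [← L.projection_add_projection_eq_self hLM v]
    rw [map_add, smul_add, g.pow_apply_eq_pow_smul hgL n (L.projection_apply_mem hLM v),
      smul_smul, inv_mul_cancel₀ (pow_ne_zero n ha), one_smul]
  simpa [hsplit] using tendsto_const_nhds.add
    (tendsto_inv_pow_smul_pow_apply hLM hL ha hgL hgM hatt (M.projection_apply_mem hLM.symm v))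

theorem eventually_infDist_pow_apply_le (hLM : IsCompl L M) (hL : Module.finrank ℝ L = 1)
    (hgL : L.map (g : V →ₗ[ℝ] V) = L) (hgM : M.map (g : V →ₗ[ℝ] V) = M)
    (hatt : ∀ w ∉ M, Tendsto (fun n : ℕ => infDist (‖(g ^ n) w‖⁻¹ • (g ^ n) w) L) atTop (𝓝 0))
    {δ : ℝ} (hδ : 0 < δ) :
    ∀ᶠ n : ℕ in atTop, ∀ v, δ * ‖v‖ ≤ infDist v M → infDist ((g ^ n) v) L ≤ δ * ‖(g ^ n) v‖ := by
  obtain ⟨a, ha, hgLa⟩ := g.exists_apply_eq_smul_of_map_eq hL hgL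
  have hT := tendsto_inv_pow_smul_pow hLM (Submodule.isAtom_iff_finrank_eq_one.2 hL).ne_bot ha
    hgLa hgM hatt
  filter_upwards [(tendsto_iff_norm_sub_tendsto_zero.1 hT).eventually
    (eventually_le_nhds (by positivity : 0 < δ ^ 2 / (1 + δ)))] with n hn v hv
  have hy := (ContinuousLinearMap.le_opNorm _ v).trans
    (mul_le_mul_of_nonneg_right hn (norm_nonneg v))
  simp only [sub_apply, LinearMap.coe_toContinuousLinearMap',
    LinearMap.smul_apply, LinearEquiv.coe_coe] at hy
  have hcone := infDist_le_mul_norm_of_norm_sub_le (L.projection_apply_mem hLM v)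
    (L.sub_projection_mem hLM v) hδ hv hy
  rwa [L.infDist_smul, norm_smul, mul_left_comm, mul_le_mul_iff_of_pos_left
    (norm_pos_iff.2 (inv_ne_zero (pow_ne_zero n ha)))] at hcone

end Contraction

namespace IsBiproximal
variable {V : Type*} [NormedAddCommGroup V] [NormedSpace ℝ V] {g : V ≃ₗ[ℝ] V}
  {Lp Lm W : Submodule ℝ V}

theorem isCompl (h : IsBiproximal g Lp Lm W) : IsCompl Lp (Lm ⊔ W) :=
  (disjoint_iff.2 h.inf_lines).isCompl_sup_right_of_isCompl_sup_left (.of_eq h.inf_W h.sup_top)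

theorem inv (h : IsBiproximal g Lp Lm W) : IsBiproximal g⁻¹ Lm Lp W where
  finrank_Lp := h.finrank_Lm
  finrank_Lm := h.finrank_Lp
  ne := h.ne.symm
  inf_lines := by rw [inf_comm, h.inf_lines]
  inf_W := by rw [sup_comm, h.inf_W]
  sup_top := by rw [sup_comm Lm, h.sup_top]
  map_Lp := (Submodule.map_symm_eq_iff g).2 h.map_Lm
  map_Lm := (Submodule.map_symm_eq_iff g).2 h.map_Lp
  map_W := (Submodule.map_symm_eq_iff g).2 h.map_W
  attract := h.repel
  repel := by simpa only [inv_inv] using h.attract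

theorem eventually_infDist_pow_apply_le [FiniteDimensional ℝ V] (h : IsBiproximal g Lp Lm W)
    {δ : ℝ} (hδ : 0 < δ) : ∀ᶠ n : ℕ in atTop,
      ∀ v, δ * ‖v‖ ≤ infDist v ((Lm ⊔ W : Submodule ℝ V) : Set V) →
        infDist ((g ^ n) v) Lp ≤ δ * ‖(g ^ n) v‖ :=
  _root_.eventually_infDist_pow_apply_le h.isCompl h.finrank_Lp h.map_Lp
    (by rw [Submodule.map_sup, h.map_Lm, h.map_W]) h.attract hδ

end IsBiproximal

namespace FreeGroup
variable {ι G X : Type*} [Group G] [MulAction G X] {f : ι → G} {A : ι × Bool → Set X} {x₀ : X}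

theorem prod_map_smul_mem_of_isReduced (h₀ : ∀ P, cond P.2 (f P.1) (f P.1)⁻¹ • x₀ ∈ A P)
    (h : ∀ P Q, Q ≠ (P.1, !P.2) → ∀ x ∈ A Q, cond P.2 (f P.1) (f P.1)⁻¹ • x ∈ A P) :
    ∀ (P : ι × Bool) (l : List (ι × Bool)), IsReduced (P :: l) →
      ((P :: l).map fun Q => cond Q.2 (f Q.1) (f Q.1)⁻¹).prod • x₀ ∈ A P
  | P, [], _ => by simpa using h₀ P
  | P, Q :: l, hl => by
    rw [isReduced_cons_cons] at hl
    rw [List.map_cons, List.prod_cons, mul_smul]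
    refine h P Q (fun hQ => ?_) _ (prod_map_smul_mem_of_isReduced h₀ h Q l hl.2)
    subst hQ
    simp at hl

theorem exists_lift_smul_mem [DecidableEq ι]
    (h₀ : ∀ P, cond P.2 (f P.1) (f P.1)⁻¹ • x₀ ∈ A P)
    (h : ∀ P Q, Q ≠ (P.1, !P.2) → ∀ x ∈ A Q, cond P.2 (f P.1) (f P.1)⁻¹ • x ∈ A P)
    {z : FreeGroup ι} (hz : z ≠ 1) : ∃ P, lift f z • x₀ ∈ A P := by
  obtain ⟨P, l, hzl⟩ := List.exists_cons_of_ne_nil (mt toWord_eq_nil_iff.1 hz)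
  refine ⟨P, ?_⟩
  rw [← mk_toWord (x := z), lift_mk, hzl]
  exact prod_map_smul_mem_of_isReduced h₀ h P l (hzl ▸ isReduced_toWord)

end FreeGroup

namespace MonoidHom
variable {G : Type*} [Group G]

theorem discreteTopology_range_of_le_norm_sub_one {R : Type*} [NormedRing R] (ρ : G →* R)
    {d : ℝ} (hd : 0 < d) (h : ∀ g ≠ 1, d ≤ ‖ρ g - 1‖) : DiscreteTopology (Set.range ρ) := by
  refine discreteTopology_iff_isOpen_singleton.2 ?_
  rintro ⟨_, z, rfl⟩
  refine Metric.isOpen_singleton_iff.2 ⟨d / (‖ρ z⁻¹‖ + 1), by positivity, ?_⟩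
  rintro ⟨_, y, rfl⟩ hyz
  rw [Subtype.dist_eq, dist_eq_norm, lt_div_iff₀ (by positivity)] at hyz
  suffices z⁻¹ * y = 1 by rw [inv_mul_eq_one.1 this]
  by_contra hne
  have hfac : ρ (z⁻¹ * y) - 1 = ρ z⁻¹ * (ρ y - ρ z) := by
    rw [mul_sub, ← map_mul, ← map_mul, inv_mul_cancel, map_one]
  have := (h _ hne).trans (hfac ▸ norm_mul_le _ _)
  nlinarith [norm_nonneg (ρ y - ρ z)]

theorem discreteTopology_range_of_apply_mem {𝕜 E : Type*} [NontriviallyNormedField 𝕜]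
    [NormedAddCommGroup E] [NormedSpace 𝕜 E] (ρ : G →* (E →L[𝕜] E)) {x₀ : E} {C : Set E}
    (hC : IsClosed C) (hx₀ : x₀ ∉ C) (h : ∀ g ≠ 1, ρ g x₀ ∈ C) :
    DiscreteTopology (Set.range ρ) := by
  obtain ⟨r, hr, hball⟩ := Metric.isOpen_iff.1 hC.isOpen_compl x₀ hx₀
  refine ρ.discreteTopology_range_of_le_norm_sub_one (d := r / (‖x₀‖ + 1)) (by positivity)
    fun g hg => ?_
  have hr_le : r ≤ ‖(ρ g - 1) x₀‖ := by
    by_contra! hlt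
    exact hball (by simpa [dist_eq_norm] using hlt) (h g hg)
  rw [div_le_iff₀ (by positivity)]
  nlinarith [(ρ g - 1).le_opNorm x₀, norm_nonneg (ρ g - 1)]

end MonoidHom

section Letters
variable {ι V : Type*} [NormedAddCommGroup V] [NormedSpace ℝ V] {γ : ι → V ≃ₗ[ℝ] V}
  {Lp Lm W : ι → Submodule ℝ V}

/-- The letter `(i, true)` stands for `γ i` and `(i, false)` for `(γ i)⁻¹`, as in
`FreeGroup.lift_mk`. -/
def attractingLine (Lp Lm : ι → Submodule ℝ V) (P : ι × Bool) : Submodule ℝ V :=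
  if P.2 then Lp P.1 else Lm P.1

def repellingSubspace (Lp Lm W : ι → Submodule ℝ V) (P : ι × Bool) : Submodule ℝ V :=
  attractingLine Lp Lm (P.1, !P.2) ⊔ W P.1

theorem IsBiproximal.letter (hbi : ∀ i, IsBiproximal (γ i) (Lp i) (Lm i) (W i))
    (P : ι × Bool) : IsBiproximal (cond P.2 (γ P.1) (γ P.1)⁻¹) (attractingLine Lp Lm P)
      (attractingLine Lp Lm (P.1, !P.2)) (W P.1) := by
  obtain ⟨i, _ | _⟩ := P
  exacts [(hbi i).inv, hbi i]

theorem disjoint_attractingLine_repellingSubspace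
    (hbi : ∀ i, IsBiproximal (γ i) (Lp i) (Lm i) (W i))
    (hpos : ∀ i j, i ≠ j → ∀ α β : Bool,
      ¬ (if α then Lp i else Lm i) ≤ (if β then Lp j else Lm j) ⊔ W j)
    {P Q : ι × Bool} (hQP : Q ≠ (P.1, !P.2)) :
    Disjoint (attractingLine Lp Lm Q) (repellingSubspace Lp Lm W P) := by
  by_cases hi : Q.1 = P.1
  · obtain rfl : Q = P := Prod.ext hi (by simpa [Prod.ext_iff, hi] using hQP)
    exact (IsBiproximal.letter hbi Q).isCompl.disjoint
  · exact (Submodule.isAtom_iff_finrank_eq_one.2 (IsBiproximal.letter hbi Q).finrank_Lp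
      |>.not_le_iff_disjoint).1 (hpos _ _ hi _ _)

theorem exists_pingPong_parameters [Finite ι] [FiniteDimensional ℝ V]
    (hbi : ∀ i, IsBiproximal (γ i) (Lp i) (Lm i) (W i))
    (hpos : ∀ i j, i ≠ j → ∀ α β : Bool,
      ¬ (if α then Lp i else Lm i) ≤ (if β then Lp j else Lm j) ⊔ W j) :
    ∃ x₀ : V, ∃ δ > 0, (∀ P, δ * ‖x₀‖ < infDist x₀ (repellingSubspace Lp Lm W P : Set V)) ∧
      (∀ P, δ * ‖x₀‖ < infDist x₀ (attractingLine Lp Lm P : Set V)) ∧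
      ∀ P Q, Q ≠ (P.1, !P.2) → ∀ v, infDist v (attractingLine Lp Lm Q : Set V) ≤ δ * ‖v‖ →
        δ * ‖v‖ ≤ infDist v (repellingSubspace Lp Lm W P : Set V) := by
  obtain ⟨x₀, hx₀⟩ : ∃ x₀ : V, ∀ P, x₀ ∉ repellingSubspace Lp Lm W P := by
    by_contra! hcov
    obtain ⟨P, hP⟩ := Subspace.exists_eq_top_of_iUnion_eq_univ
      (Set.eq_univ_of_forall fun x => Set.mem_iUnion.2 (hcov x))
    have hc := (IsBiproximal.letter hbi P).isCompl
    exact (Submodule.isAtom_iff_finrank_eq_one.2 (IsBiproximal.letter hbi P).finrank_Lp).ne_bot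
      (eq_bot_of_isCompl_top (hP ▸ hc))
  have hx₀R (P : ι × Bool) : ∀ᶠ δ in 𝓝[>] (0 : ℝ),
      δ * ‖x₀‖ < infDist x₀ (repellingSubspace Lp Lm W P : Set V) := by
    have hd := (Submodule.closed_of_finiteDimensional _).notMem_iff_infDist_pos
      ⟨0, Submodule.zero_mem _⟩ |>.1 (hx₀ P)
    have ht : Tendsto (fun δ : ℝ => δ * ‖x₀‖) (𝓝 0) (𝓝 0) := by
      simpa using (tendsto_id (x := 𝓝 (0 : ℝ))).mul_const ‖x₀‖
    exact nhdsWithin_le_nhds (ht.eventually_lt_const hd)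
  obtain ⟨δ, ⟨hR, hsep⟩, hδ⟩ := ((eventually_all.2 hx₀R).and (eventually_all.2 fun P : ι × Bool =>
    eventually_all.2 fun Q : ι × Bool => eventually_imp_distrib_left.2 fun hQP =>
      Submodule.eventually_le_infDist_of_infDist_le
        (disjoint_attractingLine_repellingSubspace hbi hpos hQP))).and
    self_mem_nhdsWithin |>.exists
  refine ⟨x₀, δ, hδ, hR, fun P => (hR (P.1, !P.2)).trans_le ?_, hsep⟩
  refine infDist_le_infDist_of_subset (SetLike.coe_subset_coe.2 ?_) ⟨0, Submodule.zero_mem _⟩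
  rw [repellingSubspace, Bool.not_not]
  exact le_sup_left

end Letters

theorem lemma_4_7_general {V : Type*} [NormedAddCommGroup V] [NormedSpace ℝ V]
    [FiniteDimensional ℝ V]
    (k : ℕ) (γ : Fin k → (V ≃ₗ[ℝ] V))
    (Lp Lm W : Fin k → Submodule ℝ V)
    (hbi : ∀ i, IsBiproximal (γ i) (Lp i) (Lm i) (W i))
    (hpos : ∀ i j, i ≠ j → ∀ α β : Bool,
      ¬ (if α then Lp i else Lm i) ≤ (if β then Lp j else Lm j) ⊔ W j) :
    ∃ N₀ : ℕ, ∀ N ≥ N₀,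
      Function.Injective (FreeGroup.lift (fun i : Fin k => (γ i) ^ N) :
        FreeGroup (Fin k) →* (V ≃ₗ[ℝ] V)) ∧
      DiscreteTopology
        ((fun g : V ≃ₗ[ℝ] V => LinearMap.toContinuousLinearMap (g : V →ₗ[ℝ] V)) ''
          (Subgroup.closure (Set.range (fun i : Fin k => (γ i) ^ N)) :
            Set (V ≃ₗ[ℝ] V))) := by
  obtain ⟨x₀, δ, hδ, hx₀R, hx₀A, hsep⟩ := exists_pingPong_parameters hbi hpos
  obtain ⟨N₀, hN₀⟩ := eventually_atTop.1 <| eventually_all.2 fun P : Fin k × Bool =>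
    (IsBiproximal.letter hbi P).eventually_infDist_pow_apply_le hδ
  refine ⟨N₀, fun N hN => ?_⟩
  set C : Fin k × Bool → Set V :=
    fun P => {v | infDist v (attractingLine Lp Lm P : Set V) ≤ δ * ‖v‖}
  have hmaps (P : Fin k × Bool) (v : V)
      (hv : δ * ‖v‖ ≤ infDist v (repellingSubspace Lp Lm W P : Set V)) :
      cond P.2 (γ P.1 ^ N) (γ P.1 ^ N)⁻¹ • v ∈ C P := by
    rw [show cond P.2 (γ P.1 ^ N) (γ P.1 ^ N)⁻¹ = cond P.2 (γ P.1) (γ P.1)⁻¹ ^ N by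
      cases P.2 <;> simp [inv_pow]]
    exact hN₀ N hN P v hv
  have hC (z : FreeGroup (Fin k)) (hz : z ≠ 1) :
      FreeGroup.lift (fun i => γ i ^ N) z x₀ ∈ ⋃ P, C P :=
    Set.mem_iUnion.2 <| FreeGroup.exists_lift_smul_mem (f := fun i => γ i ^ N) (A := C)
      (fun P => hmaps P x₀ (hx₀R P).le) (fun P Q hQP v hv => hmaps P v (hsep P Q hQP v hv)) hz
  have hx₀C : x₀ ∉ ⋃ P, C P := by simpa [C] using hx₀A
  refine ⟨(injective_iff_map_eq_one _).2 fun z hz =>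
    by_contra fun h1 => hx₀C (by simpa [hz] using hC z h1), ?_⟩
  rw [← FreeGroup.range_lift_eq_closure, MonoidHom.coe_range, ← Set.range_comp]
  exact MonoidHom.discreteTopology_range_of_apply_mem
    ((Module.End.toContinuousLinearMap V).toMonoidHom.comp
      (LinearEquiv.automorphismGroup.toLinearMapMonoidHom.comp (FreeGroup.lift _)))
    (isClosed_iUnion_of_finite fun P =>
      isClosed_le (continuous_infDist_pt _) (continuous_const.mul continuous_norm))
    hx₀C hC

/-- The freeness and discreteness conclusions of Lemma 4.7: biproximal elements with
pairwise distinct attracting/repelling lines in general position have high powers that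
freely generate a discrete free subgroup of `GL(V)`. -/
theorem lemma_4_7 {V : Type*} [NormedAddCommGroup V] [NormedSpace ℝ V]
    [FiniteDimensional ℝ V]
    (k : ℕ) (hk : 2 ≤ k) (γ : Fin k → (V ≃ₗ[ℝ] V))
    (Lp Lm W : Fin k → Submodule ℝ V)
    (hbi : ∀ i, IsBiproximal (γ i) (Lp i) (Lm i) (W i))
    (hdist : ∀ (i j : Fin k) (α β : Bool), (i, α) ≠ (j, β) →
      (if α then Lp i else Lm i) ≠ (if β then Lp j else Lm j))
    (hpos : ∀ i j, i ≠ j → ∀ α β : Bool,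
      ¬ (if α then Lp i else Lm i) ≤ (if β then Lp j else Lm j) ⊔ W j) :
    ∃ N₀ : ℕ, ∀ N ≥ N₀,
      Function.Injective (FreeGroup.lift (fun i : Fin k => (γ i) ^ N) :
        FreeGroup (Fin k) →* (V ≃ₗ[ℝ] V)) ∧
      DiscreteTopology
        ((fun g : V ≃ₗ[ℝ] V => LinearMap.toContinuousLinearMap (g : V →ₗ[ℝ] V)) ''
          (Subgroup.closure (Set.range (fun i : Fin k => (γ i) ^ N)) :
            Set (V ≃ₗ[ℝ] V))) :=
  lemma_4_7_general k γ Lp Lm W hbi hpos
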